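/- Fix s > 0, c ∈ (0,1), ω ≥ 0, ζ ≥ 0, η ≥ 0, ν ∈ (0,1], and α > 0 with α ≠ ν, and set a = s(1−c) + ω². For λ > 0 define X(λ) = sqrt((aα − aν + λν)² + 4aλν²), q̂(λ) = (X(λ) + aα − (a + λ)ν)/(2aλ), S(λ) = q̂(λ)/(ν + a·q̂(λ)), γ(λ) = a²νS(λ)²/α, I¹ = (s(1−c)(1−ν) + ω²)/ν, and E¹(λ) = (I¹ + γ(λ)ζ² + η²)/(1 − γ(λ)). Then as λ → 0⁺, E¹(λ) converges to: (ν/(ν−α))·(s(1−c)(1−ν) + ω²)/ν + (αζ² + νη²)/(ν − α) if α < ν, and (α/(α−ν))·(s(1−c)(1−ν) + ω²)/ν + (νζ² + αη²)/(α − ν) if α > ν. -/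

import Mathlib

/-!
For `λ > 0` the numerator of `q̂(λ)` can be rationalised, which turns `S(λ)` into
`2α / (X(λ) + aα + aν + λν)` with `X = sqrtDisc`. This expression is continuous at
`λ = 0`, where `X(0) = a|α - ν|`, so `S(0⁺) = α / (a · max α ν)` and
`γ(0⁺) = min α ν / max α ν < 1`; the error `E¹ = (I¹ + γζ² + η²)/(1 - γ)` then
converges by continuity.
-/

/-- Conjugate order parameter of the replica saddle-point equations. -/
noncomputable def qhatFun (a α ν lam : ℝ) : ℝ :=
  (Real.sqrt ((a * α - a * ν + lam * ν) ^ 2 + 4 * a * lam * ν ^ 2)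
      + a * α - (a + lam) * ν) / (2 * a * lam)

/-- Reduced resolvent factor `S(λ) = q̂(λ)/(ν + a·q̂(λ))`. -/
noncomputable def Sfun (a α ν lam : ℝ) : ℝ :=
  qhatFun a α ν lam / (ν + a * qhatFun a α ν lam)

/-- Overlap parameter `γ(λ) = a²νS(λ)²/α`. -/
noncomputable def gammaFun (a α ν lam : ℝ) : ℝ :=
  a ^ 2 * ν * Sfun a α ν lam ^ 2 / α

open Filter Topology

noncomputable def sqrtDisc (a α ν lam : ℝ) : ℝ :=
  √((a * α - a * ν + lam * ν) ^ 2 + 4 * a * lam * ν ^ 2)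

noncomputable def SfunExt (a α ν lam : ℝ) : ℝ :=
  2 * α / (sqrtDisc a α ν lam + a * α + a * ν + lam * ν)

section

variable {a α ν lam : ℝ}

lemma sq_sqrtDisc (ha : 0 ≤ a) (hl : 0 ≤ lam) :
    sqrtDisc a α ν lam ^ 2 = (a * α - a * ν + lam * ν) ^ 2 + 4 * a * lam * ν ^ 2 :=
  Real.sq_sqrt (by positivity)

lemma lt_sqrtDisc (ha : 0 < a) (hν : 0 < ν) (hl : 0 < lam) :
    a * α - a * ν + lam * ν < sqrtDisc a α ν lam := by
  apply lt_of_abs_lt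
  apply abs_lt_of_sq_lt_sq _ (Real.sqrt_nonneg _)
  rw [← sqrtDisc, sq_sqrtDisc ha.le hl.le]
  have : 0 < 4 * a * lam * ν ^ 2 := by positivity
  linarith

lemma qhatFun_eq (ha : 0 < a) (hν : 0 < ν) (hl : 0 < lam) :
    qhatFun a α ν lam = 2 * α * ν / (sqrtDisc a α ν lam - a * α + a * ν + lam * ν) := by
  have hX := lt_sqrtDisc (α := α) ha hν hl
  have hX2 := sq_sqrtDisc (α := α) (ν := ν) ha.le hl.le
  rw [qhatFun, ← sqrtDisc, div_eq_div_iff (by positivity) (by nlinarith)]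
  linear_combination hX2

lemma Sfun_eq (ha : 0 < a) (hν : 0 < ν) (hl : 0 < lam) :
    Sfun a α ν lam = SfunExt a α ν lam := by
  have hX := lt_sqrtDisc (α := α) ha hν hl
  set T := sqrtDisc a α ν lam - a * α + a * ν + lam * ν
  have hT : 0 < T := by linarith [mul_pos hl hν]
  have hden :
      ν + a * (2 * α * ν / T) = ν * (sqrtDisc a α ν lam + a * α + a * ν + lam * ν) / T := by
    field_simp
    ring
  rw [Sfun, SfunExt, qhatFun_eq ha hν hl, hden, div_div_div_cancel_right₀ hT.ne',
    mul_comm ν, mul_div_mul_right _ _ hν.ne']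

@[fun_prop]
lemma continuous_sqrtDisc : Continuous (sqrtDisc a α ν) := by
  unfold sqrtDisc
  fun_prop

lemma sqrtDisc_zero (ha : 0 < a) : sqrtDisc a α ν 0 = a * |α - ν| := by
  simp [sqrtDisc, Real.sqrt_sq_eq_abs, ← mul_sub, abs_mul, abs_of_pos ha]

lemma SfunExt_zero (ha : 0 < a) : SfunExt a α ν 0 = α / (a * max α ν) := by
  have hden : sqrtDisc a α ν 0 + a * α + a * ν + 0 * ν = 2 * a * max α ν := by
    rw [sqrtDisc_zero ha]
    rcases le_total α ν with h | h
    · rw [abs_of_nonpos (by linarith), max_eq_right h]; ring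
    · rw [abs_of_nonneg (by linarith), max_eq_left h]; ring
  rw [SfunExt, hden, mul_assoc, mul_div_mul_left _ _ two_ne_zero]

lemma continuousAt_SfunExt_zero (ha : 0 < a) (hν : 0 < ν) : ContinuousAt (SfunExt a α ν) 0 := by
  refine continuousAt_const.div (by fun_prop) ?_
  have hden : 0 < a * |α - ν| + a * α + a * ν + 0 * ν := by
    nlinarith [le_abs_self (α - ν), neg_abs_le (α - ν)]
  rw [sqrtDisc_zero ha]
  exact hden.ne'

lemma tendsto_Sfun (ha : 0 < a) (hν : 0 < ν) :
    Tendsto (Sfun a α ν) (𝓝[>] 0) (𝓝 (α / (a * max α ν))) := by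
  rw [← SfunExt_zero ha]
  refine ((continuousAt_SfunExt_zero ha hν).tendsto.mono_left nhdsWithin_le_nhds).congr' ?_
  exact eventually_nhdsWithin_of_forall fun _ hl => (Sfun_eq ha hν hl).symm

lemma tendsto_gammaFun (ha : 0 < a) (hν : 0 < ν) :
    Tendsto (gammaFun a α ν) (𝓝[>] 0) (𝓝 (min α ν / max α ν)) := by
  have hmax : max α ν ≠ 0 := (lt_max_of_lt_right hν).ne'
  have hlim := (((tendsto_Sfun (α := α) ha hν).pow 2).const_mul (a ^ 2 * ν)).div_const α
  show Tendsto (fun lam => a ^ 2 * ν * Sfun a α ν lam ^ 2 / α) _ _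
  convert hlim using 2
  field_simp
  rw [min_mul_max, mul_comm]

end

lemma Filter.Tendsto.add_mul_div_one_sub {ι : Type*} {l : Filter ι} {γ : ι → ℝ} {r : ℝ}
    (hγ : Tendsto γ l (𝓝 r)) (hr : r ≠ 1) (I ζ η : ℝ) :
    Tendsto (fun x => (I + γ x * ζ ^ 2 + η ^ 2) / (1 - γ x)) l
      (𝓝 ((I + r * ζ ^ 2 + η ^ 2) / (1 - r))) :=
  ((hγ.mul_const _).const_add I).add_const _ |>.div (hγ.const_sub 1) (sub_ne_zero.2 hr.symm)

theorem stmt_11_general (s c ω ζ η ν α : ℝ) (hs : 0 < s) (hc : c ∈ Set.Ioo (0 : ℝ) 1)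
    (hν : ν ∈ Set.Ioc (0 : ℝ) 1)
    (hα : 0 < α) (hαν : α ≠ ν) :
    let a := s * (1 - c) + ω ^ 2
    Filter.Tendsto
      (fun lam : ℝ =>
        ((s * (1 - c) * (1 - ν) + ω ^ 2) / ν
            + gammaFun a α ν lam * ζ ^ 2 + η ^ 2) / (1 - gammaFun a α ν lam))
      (nhdsWithin 0 (Set.Ioi 0))
      (nhds (if α < ν then
          (ν / (ν - α)) * ((s * (1 - c) * (1 - ν) + ω ^ 2) / ν)
            + (α * ζ ^ 2 + ν * η ^ 2) / (ν - α)
        else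
          (α / (α - ν)) * ((s * (1 - c) * (1 - ν) + ω ^ 2) / ν)
            + (ν * ζ ^ 2 + α * η ^ 2) / (α - ν))) := by
  intro a
  have ha : 0 < a := by
    have : 0 < s * (1 - c) := mul_pos hs (by linarith [hc.2])
    positivity
  have hγ := tendsto_gammaFun (α := α) ha hν.1
  set I := (s * (1 - c) * (1 - ν) + ω ^ 2) / ν
  rcases lt_or_gt_of_ne hαν with h | h
  · rw [min_eq_left h.le, max_eq_right h.le] at hγ
    convert hγ.add_mul_div_one_sub ((div_lt_one hν.1).2 h).ne I ζ η using 2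
    rw [if_pos h]
    field_simp [hν.1.ne', hα.ne', (sub_pos.2 h).ne']
    ring
  · rw [min_eq_right h.le, max_eq_left h.le] at hγ
    convert hγ.add_mul_div_one_sub ((div_lt_one hα).2 h).ne I ζ η using 2
    rw [if_neg h.not_gt]
    field_simp [hν.1.ne', hα.ne', (sub_pos.2 h).ne']
    ring

/-- Ridgeless limit of the `ρ = 1` component of the diagonal generalization error of a
single feature-subsampling ridge predictor on equicorrelated data. -/
theorem stmt_11 (s c ω ζ η ν α : ℝ) (hs : 0 < s) (hc : c ∈ Set.Ioo (0 : ℝ) 1)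
    (hω : 0 ≤ ω) (hζ : 0 ≤ ζ) (hη : 0 ≤ η) (hν : ν ∈ Set.Ioc (0 : ℝ) 1)
    (hα : 0 < α) (hαν : α ≠ ν) :
    let a := s * (1 - c) + ω ^ 2
    Filter.Tendsto
      (fun lam : ℝ =>
        ((s * (1 - c) * (1 - ν) + ω ^ 2) / ν
            + gammaFun a α ν lam * ζ ^ 2 + η ^ 2) / (1 - gammaFun a α ν lam))
      (nhdsWithin 0 (Set.Ioi 0))
      (nhds (if α < ν then
          (ν / (ν - α)) * ((s * (1 - c) * (1 - ν) + ω ^ 2) / ν)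
            + (α * ζ ^ 2 + ν * η ^ 2) / (ν - α)
        else
          (α / (α - ν)) * ((s * (1 - c) * (1 - ν) + ω ^ 2) / ν)
            + (ν * ζ ^ 2 + α * η ^ 2) / (α - ν))) :=
  stmt_11_general s c ω ζ η ν α hs hc hν hα hαν
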